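/- Let ϑ be a semi-measure that is semi-translation bounded, intertwining, and positive definite (ϑ(f * f~) ≥ 0 for all f ∈ C_c(G)). Then for every f ∈ C_c(G), the function ϑ * (f * f~) is a continuous positive definite function on G. -/

import Mathlib

set_option linter.unusedSectionVars false


open MeasureTheory Complex Filter Topology Pointwise

noncomputable section

section Defs

variable (G : Type*) [AddCommGroup G] [UniformSpace G] [IsUniformAddGroup G]
  [MeasurableSpace G] [BorelSpace G]

/-- Continuous compactly supported complex-valued functions on `G`. -/
def Cc : Set (G → ℂ) := {f | Continuous f ∧ HasCompactSupport f}

variable {G}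

/-- Convolution of two functions with respect to a (Haar) measure `θ`. -/
def conv (θ : Measure G) (f g : G → ℂ) : G → ℂ := fun x => ∫ y, f y * g (x - y) ∂θ

/-- `f~(x) = conj (f (-x))`. -/
def ftilde (f : G → ℂ) : G → ℂ := fun x => (starRingEnd ℂ) (f (-x))

/-- `K₂(G)`: the linear span of convolutions of compactly supported continuous functions. -/
def K2 (θ : Measure G) : Submodule ℂ (G → ℂ) :=
  Submodule.span ℂ {h | ∃ f ∈ Cc G, ∃ g ∈ Cc G, h = conv θ f g}

open scoped Classical in
/-- Application of a semi-measure (a linear functional on `K₂(G)`) to a function,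
with junk value `0` outside `K₂(G)`. -/
def smApply (θ : Measure G) (ϑ : K2 θ →ₗ[ℂ] ℂ) (f : G → ℂ) : ℂ :=
  if h : f ∈ K2 θ then ϑ ⟨f, h⟩ else 0

/-- Convolution of a semi-measure with a function: `(ϑ * f)(t) = ϑ (T_t f†)`. -/
def smConv (θ : Measure G) (ϑ : K2 θ →ₗ[ℂ] ℂ) (f : G → ℂ) : G → ℂ :=
  fun t => smApply θ ϑ (fun x => f (t - x))

/-- A semi-measure is semi-translation bounded if `ϑ * f` is bounded and
uniformly continuous for every `f ∈ K₂(G)`. -/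
def SemiTB (θ : Measure G) (ϑ : K2 θ →ₗ[ℂ] ℂ) : Prop :=
  ∀ f ∈ K2 θ, UniformContinuous (smConv θ ϑ f) ∧ ∃ C : ℝ, ∀ t, ‖smConv θ ϑ f t‖ ≤ C

/-- A semi-measure is intertwining if `(ϑ * f) * g = ϑ * (f * g)`. -/
def Intertwining (θ : Measure G) (ϑ : K2 θ →ₗ[ℂ] ℂ) : Prop :=
  ∀ f ∈ K2 θ, ∀ g ∈ K2 θ, conv θ (smConv θ ϑ f) g = smConv θ ϑ (conv θ f g)

/-- A semi-measure is positive definite if `ϑ(f * f~) ≥ 0` for all `f ∈ C_c(G)`. -/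
def PosDefSM (θ : Measure G) (ϑ : K2 θ →ₗ[ℂ] ℂ) : Prop :=
  ∀ f ∈ Cc G, 0 ≤ (smApply θ ϑ (conv θ f (ftilde f))).re ∧
    (smApply θ ϑ (conv θ f (ftilde f))).im = 0

end Defs

section Dual

variable {G : Type*} [AddCommGroup G] [TopologicalSpace G]

/-- The dual group: continuous characters of `G`, with the compact-open topology. -/
def DualGroup (G : Type*) [AddCommGroup G] [TopologicalSpace G] : Type _ :=
  {χ : C(G, ℂ) // (∀ x y, χ (x + y) = χ x * χ y) ∧ ∀ x, ‖χ x‖ = 1}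

instance : TopologicalSpace (DualGroup G) := instTopologicalSpaceSubtype

instance : MeasurableSpace (DualGroup G) := borel _

/-- Product of two characters. -/
def dMul (χ ψ : DualGroup G) : DualGroup G :=
  ⟨χ.1 * ψ.1, by
    refine ⟨fun x y => ?_, fun x => ?_⟩
    · simp only [ContinuousMap.mul_apply, χ.2.1 x y, ψ.2.1 x y]; ring
    · simp only [ContinuousMap.mul_apply, norm_mul, χ.2.2 x, ψ.2.2 x, mul_one]⟩

/-- Inverse (conjugate) of a character. -/
def dInv (χ : DualGroup G) : DualGroup G :=
  ⟨⟨fun x => (starRingEnd ℂ) (χ.1 x), by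
      exact continuous_star.comp χ.1.continuous⟩, by
    refine ⟨fun x y => ?_, fun x => ?_⟩
    · show (starRingEnd ℂ) (χ.1 (x + y)) = _
      rw [χ.2.1 x y, map_mul]; rfl
    · show ‖(starRingEnd ℂ) (χ.1 x)‖ = 1
      rw [starRingEnd_apply, norm_star]; exact χ.2.2 x⟩

variable [MeasurableSpace G]

/-- Fourier transform of a function on `G`, as a function on the dual group. -/
def ftF (θ : Measure G) (f : G → ℂ) : DualGroup G → ℂ :=
  fun χ => ∫ t, (starRingEnd ℂ) (χ.1 t) * f t ∂θ

/-- Inverse Fourier transform of a function on `G`, as a function on the dual group. -/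
def iftF (θ : Measure G) (f : G → ℂ) : DualGroup G → ℂ :=
  fun χ => ∫ t, (χ.1 t) * f t ∂θ

/-- Continuous compactly supported functions on the dual group. -/
def CcHat : Set (DualGroup G → ℂ) := {f | Continuous f ∧ HasCompactSupport f}

/-- Convolution on the dual group. -/
def convHat (θh : Measure (DualGroup G)) (F H : DualGroup G → ℂ) : DualGroup G → ℂ :=
  fun χ => ∫ ψ, F ψ * H (dMul χ (dInv ψ)) ∂θh

/-- `K₂(Ĝ)`. -/
def K2Hat (θh : Measure (DualGroup G)) : Submodule ℂ (DualGroup G → ℂ) :=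
  Submodule.span ℂ {h | ∃ F ∈ CcHat (G := G), ∃ H ∈ CcHat (G := G), h = convHat θh F H}

/-- Inverse Fourier transform of a function on the dual group, as a function on `G`. -/
def iftHat (θh : Measure (DualGroup G)) (f : DualGroup G → ℂ) : G → ℂ :=
  fun t => ∫ χ, (χ.1 t) * f χ ∂θh

end Dual

section CMeas

/-- A complex (Radon) measure presented in polar form: a positive total variation
measure together with a unimodular density. -/
structure CMeasure (X : Type*) [MeasurableSpace X] where
  tv : Measure X
  density : X → ℂ
  norm_density : ∀ x, ‖density x‖ = 1

/-- Integral of a function against a complex measure. -/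
def CMeasure.integral {X : Type*} [MeasurableSpace X] (ν : CMeasure X) (f : X → ℂ) : ℂ :=
  ∫ x, f x * ν.density x ∂ν.tv

end CMeas

section FT

variable {G : Type*} [AddCommGroup G] [UniformSpace G] [IsUniformAddGroup G]
  [MeasurableSpace G] [BorelSpace G]

/-- `ν` is the Fourier transform of the semi-measure `ϑ`:
`|f̌|² ∈ L¹(ν)` and `ϑ(f * f~) = ν(|f̌|²)` for all `f ∈ C_c(G)`. -/
def IsSMFourierTransform (θ : Measure G) (ϑ : K2 θ →ₗ[ℂ] ℂ)
    (ν : CMeasure (DualGroup G)) : Prop :=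
  ∀ f ∈ Cc G, Integrable (fun χ => ‖iftF θ f χ‖ ^ 2) ν.tv ∧
    smApply θ ϑ (conv θ f (ftilde f)) = ν.integral (fun χ => ((‖iftF θ f χ‖ ^ 2 : ℝ) : ℂ))

end FT

section Aux2

section Aux

variable {G : Type*} [AddCommGroup G] [UniformSpace G] [IsUniformAddGroup G]
  [LocallyCompactSpace G] [MeasurableSpace G] [BorelSpace G]
  (θ : Measure G) [θ.IsAddHaarMeasure]

theorem ftilde_mem_Cc {f : G → ℂ} (hf : f ∈ Cc G) : ftilde f ∈ Cc G := by
  refine ⟨Complex.continuous_conj.comp (hf.1.comp continuous_neg), ?_⟩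
  have h1 : HasCompactSupport (f ∘ ⇑(Homeomorph.neg G)) :=
    hf.2.comp_isClosedEmbedding (Homeomorph.neg G).isClosedEmbedding
  exact h1.comp_left (g := (starRingEnd ℂ)) (map_zero _)

theorem conj_mem_Cc {f : G → ℂ} (hf : f ∈ Cc G) :
    (fun x => (starRingEnd ℂ) (f x)) ∈ Cc G :=
  ⟨Complex.continuous_conj.comp hf.1, hf.2.comp_left (g := (starRingEnd ℂ)) (map_zero _)⟩

theorem ftilde_ftilde (f : G → ℂ) : ftilde (ftilde f) = f := by
  funext x; simp [ftilde]

theorem conv_mem_Cc {f g : G → ℂ} (hf : f ∈ Cc G) (hg : g ∈ Cc G) :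
    conv θ f g ∈ Cc G := by
  have he : conv θ f g = MeasureTheory.convolution f g (ContinuousLinearMap.mul ℂ ℂ) θ := rfl
  constructor
  · rw [he]
    exact hg.2.continuous_convolution_right _ (hf.1.locallyIntegrable) hg.1
  · have hsupp : Function.support (conv θ f g) ⊆ tsupport g + tsupport f := by
      rw [he]
      exact (MeasureTheory.support_convolution_subset_swap _).trans
        (Set.add_subset_add subset_closure subset_closure)
    exact IsCompact.of_isClosed_subset (hg.2.isCompact.add hf.2.isCompact).closure isClosed_closure
      (closure_minimal (hsupp.trans subset_closure) isClosed_closure)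

theorem conv_assoc {p q r : G → ℂ} (hp : p ∈ Cc G) (hq : q ∈ Cc G) (hr : r ∈ Cc G) :
    conv θ (conv θ p q) r = conv θ p (conv θ q r) := by
  funext t
  have hfub : ∫ a, ∫ c, p c * q (a - c) * r (t - a) ∂θ ∂θ
      = ∫ c, ∫ a, p c * q (a - c) * r (t - a) ∂θ ∂θ := by
    apply integral_integral_swap_of_hasCompactSupport
    · exact ((hp.1.comp continuous_snd).mul
        (hq.1.comp (continuous_fst.sub continuous_snd))).mul
        (hr.1.comp (continuous_const.sub continuous_fst))
    · have hsub : Function.support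
          (Function.uncurry fun a c => p c * q (a - c) * r (t - a)) ⊆
          (closure (tsupport q + tsupport p)) ×ˢ tsupport p := by
        rintro ⟨a, c⟩ h
        simp only [Function.uncurry, Function.mem_support, Ne, mul_eq_zero, not_or] at h
        refine ⟨subset_closure ?_, subset_tsupport _ h.1.1⟩
        exact ⟨a - c, subset_tsupport _ h.1.2, c, subset_tsupport _ h.1.1, by show a - c + c = a; abel⟩
      exact IsCompact.of_isClosed_subset (((hq.2.isCompact.add hp.2.isCompact).closure).prod hp.2.isCompact)
        (isClosed_tsupport _)
        (closure_minimal hsub (isClosed_closure.prod (isClosed_tsupport _)))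
  calc conv θ (conv θ p q) r t
      = ∫ a, (∫ c, p c * q (a - c) ∂θ) * r (t - a) ∂θ := rfl
    _ = ∫ a, ∫ c, p c * q (a - c) * r (t - a) ∂θ ∂θ := by
        congr 1; funext a; exact (integral_mul_const _ _).symm
    _ = ∫ c, ∫ a, p c * q (a - c) * r (t - a) ∂θ ∂θ := hfub
    _ = ∫ c, ∫ a, p c * (q a * r ((t - c) - a)) ∂θ ∂θ := by
        congr 1; funext c
        rw [← integral_add_right_eq_self (μ := θ)
          (fun a => p c * q (a - c) * r (t - a)) c]
        congr 1; funext a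
        have h1 : a + c - c = a := by abel
        have h2 : t - (a + c) = (t - c) - a := by abel
        rw [h1, h2, mul_assoc]
    _ = ∫ c, p c * ∫ a, q a * r ((t - c) - a) ∂θ ∂θ := by
        congr 1; funext c; exact integral_const_mul _ _
    _ = conv θ p (conv θ q r) t := rfl

theorem conv_left_comm {p q r : G → ℂ} (hp : p ∈ Cc G) (hq : q ∈ Cc G) (hr : r ∈ Cc G) :
    conv θ p (conv θ q r) = conv θ q (conv θ p r) := by
  funext t
  have hfub : ∫ c, ∫ a, p c * (q a * r ((t - c) - a)) ∂θ ∂θ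
      = ∫ a, ∫ c, p c * (q a * r ((t - c) - a)) ∂θ ∂θ := by
    apply integral_integral_swap_of_hasCompactSupport
    · exact (hp.1.comp continuous_fst).mul ((hq.1.comp continuous_snd).mul
        (hr.1.comp ((continuous_const.sub continuous_fst).sub continuous_snd)))
    · have hsub : Function.support
          (Function.uncurry fun c a => p c * (q a * r ((t - c) - a))) ⊆
          tsupport p ×ˢ tsupport q := by
        rintro ⟨c, a⟩ h
        simp only [Function.uncurry, Function.mem_support, Ne, mul_eq_zero, not_or] at h
        exact ⟨subset_tsupport _ h.1, subset_tsupport _ h.2.1⟩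
      exact IsCompact.of_isClosed_subset (hp.2.isCompact.prod hq.2.isCompact) (isClosed_tsupport _)
        (closure_minimal hsub ((isClosed_tsupport _).prod (isClosed_tsupport _)))
  calc conv θ p (conv θ q r) t
      = ∫ c, p c * ∫ a, q a * r ((t - c) - a) ∂θ ∂θ := rfl
    _ = ∫ c, ∫ a, p c * (q a * r ((t - c) - a)) ∂θ ∂θ := by
        congr 1; funext c; exact (integral_const_mul _ _).symm
    _ = ∫ a, ∫ c, p c * (q a * r ((t - c) - a)) ∂θ ∂θ := hfub
    _ = ∫ a, q a * ∫ c, p c * r ((t - a) - c) ∂θ ∂θ := by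
        congr 1; funext a
        rw [← integral_const_mul]
        congr 1; funext c
        have h2 : (t - c) - a = (t - a) - c := by abel
        rw [h2]; ring
    _ = conv θ q (conv θ p r) t := rfl

theorem ftilde_conv (p q : G → ℂ) :
    ftilde (conv θ p q) = conv θ (ftilde q) (ftilde p) := by
  funext t
  have lhs : ftilde (conv θ p q) t
      = ∫ a, (starRingEnd ℂ) (p a) * (starRingEnd ℂ) (q (-t - a)) ∂θ := by
    show (starRingEnd ℂ) (∫ a, p a * q ((-t) - a) ∂θ) = _
    rw [← integral_conj]
    congr 1; funext a; rw [map_mul]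
  rw [lhs]
  show _ = ∫ a, ftilde q a * ftilde p (t - a) ∂θ
  rw [← integral_add_right_eq_self (μ := θ) (fun a => ftilde q a * ftilde p (t - a)) t]
  congr 1; funext a
  show (starRingEnd ℂ) (p a) * (starRingEnd ℂ) (q (-t - a))
    = ftilde q (a + t) * ftilde p (t - (a + t))
  show _ = (starRingEnd ℂ) (q (-(a + t))) * (starRingEnd ℂ) (p (-(t - (a + t))))
  have h1 : -(a + t) = -t - a := by abel
  have h2 : -(t - (a + t)) = a := by abel
  rw [h1, h2]; ring

theorem conj_conv (p q : G → ℂ) :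
    (fun x => (starRingEnd ℂ) (conv θ p q x))
      = conv θ (fun x => (starRingEnd ℂ) (p x)) (fun x => (starRingEnd ℂ) (q x)) := by
  funext x
  show (starRingEnd ℂ) (∫ y, p y * q (x - y) ∂θ) = _
  rw [← integral_conj]
  congr 1; funext y; rw [map_mul]

end Aux

end Aux2

/-- Let `ϑ` be a semi-measure that is semi-translation bounded,
intertwining, and positive definite. Then for every `f ∈ C_c(G)`, the function
`ϑ * (f * f~)` is a continuous positive definite function on `G`, i.e.
`∫ (ϑ*(f*f~))(t) (g*g~)(t) dt ≥ 0` for all `g ∈ C_c(G)`. -/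
theorem smConv_posdef
    {G : Type*} [AddCommGroup G] [UniformSpace G] [IsUniformAddGroup G]
    [LocallyCompactSpace G] [MeasurableSpace G] [BorelSpace G]
    (θ : Measure G) [θ.IsAddHaarMeasure]
    (ϑ : K2 θ →ₗ[ℂ] ℂ)
    (htb : SemiTB θ ϑ) (hint : Intertwining θ ϑ) (hpd : PosDefSM θ ϑ) :
    ∀ f ∈ Cc G,
      Continuous (smConv θ ϑ (conv θ f (ftilde f))) ∧
      ∀ g ∈ Cc G,
        0 ≤ (∫ t, smConv θ ϑ (conv θ f (ftilde f)) t * conv θ g (ftilde g) t ∂θ).re ∧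
        (∫ t, smConv θ ϑ (conv θ f (ftilde f)) t * conv θ g (ftilde g) t ∂θ).im = 0 := by
  intro f hf
  have hft : ftilde f ∈ Cc G := ftilde_mem_Cc hf
  set F : G → ℂ := conv θ f (ftilde f) with hFdef
  have hFK2 : F ∈ K2 θ := Submodule.subset_span ⟨f, hf, ftilde f, hft, rfl⟩
  refine ⟨((htb F hFK2).1).continuous, ?_⟩
  intro g hg
  -- auxiliary functions
  set g₁ : G → ℂ := fun x => (starRingEnd ℂ) (g x) with hg1def
  have hg₁ : g₁ ∈ Cc G := conj_mem_Cc hg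
  have hg₁t : ftilde g₁ ∈ Cc G := ftilde_mem_Cc hg₁
  set B : G → ℂ := conv θ g₁ (ftilde g₁) with hBdef
  have hBK2 : B ∈ K2 θ := Submodule.subset_span ⟨g₁, hg₁, ftilde g₁, hg₁t, rfl⟩
  have hBCc : B ∈ Cc G := conv_mem_Cc θ hg₁ hg₁t
  have hFCc : F ∈ Cc G := conv_mem_Cc θ hf hft
  set u : G → ℂ := conv θ f g₁ with hudef
  have huCc : u ∈ Cc G := conv_mem_Cc θ hf hg₁
  set u₁ : G → ℂ := fun x => (starRingEnd ℂ) (u x) with hu1def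
  have hu₁Cc : u₁ ∈ Cc G := conj_mem_Cc huCc
  -- Step 1 : conv θ g (ftilde g) t = B (0 - t)
  have hBh : ∀ t, conv θ g (ftilde g) t = B (0 - t) := by
    intro t
    have e1 : conv θ g (ftilde g) t = ∫ w, g (w + t) * (starRingEnd ℂ) (g w) ∂θ := by
      show (∫ w, g w * ftilde g (t - w) ∂θ) = _
      rw [← integral_add_right_eq_self (μ := θ) (fun w => g w * ftilde g (t - w)) t]
      congr 1; funext w
      show g (w + t) * (starRingEnd ℂ) (g (-(t - (w + t)))) = _
      have h1 : -(t - (w + t)) = w := by abel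
      rw [h1]
    have e2 : B (0 - t) = ∫ w, (starRingEnd ℂ) (g w) * g (w + t) ∂θ := by
      show (∫ w, g₁ w * ftilde g₁ ((0 - t) - w) ∂θ) = _
      congr 1; funext w
      show (starRingEnd ℂ) (g w) * (starRingEnd ℂ) (g₁ (-((0 - t) - w))) = _
      have h1 : -((0 - t) - w) = w + t := by abel
      rw [h1, hg1def]
      simp
    rw [e1, e2]
    congr 1; funext w; ring
  -- Step 2 : rewrite the integral via intertwining
  have key1 : (∫ t, smConv θ ϑ F t * conv θ g (ftilde g) t ∂θ)
      = smApply θ ϑ (fun x => conv θ F B (0 - x)) := by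
    have e3 : (∫ t, smConv θ ϑ F t * conv θ g (ftilde g) t ∂θ)
        = conv θ (smConv θ ϑ F) B 0 := by
      show _ = ∫ t, smConv θ ϑ F t * B (0 - t) ∂θ
      congr 1; funext t; rw [hBh t]
    rw [e3, hint F hFK2 B hBK2]
    rfl
  -- Step 3 : (fun x => conv θ F B (0 - x)) = conv θ u₁ (ftilde u₁)
  have hftF : ftilde F = F := by
    rw [hFdef, ftilde_conv θ, ftilde_ftilde]
  have hftB : ftilde B = B := by
    rw [hBdef, ftilde_conv θ, ftilde_ftilde]
  have hBF : conv θ B F = conv θ u (ftilde u) := by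
    have hfu : ftilde u = conv θ (ftilde g₁) (ftilde f) := by
      rw [hudef, ftilde_conv θ]
    calc conv θ B F = conv θ (conv θ g₁ (ftilde g₁)) (conv θ f (ftilde f)) := rfl
      _ = conv θ g₁ (conv θ (ftilde g₁) (conv θ f (ftilde f))) :=
          conv_assoc θ hg₁ hg₁t (conv_mem_Cc θ hf hft)
      _ = conv θ g₁ (conv θ f (conv θ (ftilde g₁) (ftilde f))) := by
          rw [conv_left_comm θ hg₁t hf hft]
      _ = conv θ f (conv θ g₁ (conv θ (ftilde g₁) (ftilde f))) :=
          conv_left_comm θ hg₁ hf (conv_mem_Cc θ hg₁t hft)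
      _ = conv θ (conv θ f g₁) (conv θ (ftilde g₁) (ftilde f)) :=
          (conv_assoc θ hf hg₁ (conv_mem_Cc θ hg₁t hft)).symm
      _ = conv θ u (ftilde u) := by rw [← hfu]
  have key2 : (fun x => conv θ F B (0 - x)) = conv θ u₁ (ftilde u₁) := by
    have e4 : (fun x => conv θ F B (0 - x))
        = fun x => (starRingEnd ℂ) (ftilde (conv θ F B) x) := by
      funext x
      show _ = (starRingEnd ℂ) ((starRingEnd ℂ) (conv θ F B (-x)))
      rw [Complex.conj_conj, zero_sub]
    have hconj : (fun x => (starRingEnd ℂ) (ftilde u x)) = ftilde u₁ := by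
      funext z
      show (starRingEnd ℂ) ((starRingEnd ℂ) (u (-z))) = (starRingEnd ℂ) (u₁ (-z))
      simp [hu1def]
    rw [e4, ftilde_conv θ, hftF, hftB, hBF, conj_conv θ, hconj]
  rw [key1, key2]
  exact hpd u₁ hu₁Cc
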